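/- arXiv:1703.06744 — 4 statements merged into one kernel-verified Lean document; each statement's English description precedes it below -/
import Mathlib

section
/- Adding a new minterm (as a disjunction) to the IDR of some entity can only shrink the final failure set: if F' is the cascade in the modified network and F the cascade in the original network, both starting from the same initial failure set K, then F'(t) ⊆ F(t) for all t. -/
open scoped Classical

/-- The cascading failure process of the Implicative Interdependency Model.
`idr e = some M` means entity `e` has a dependency relation given by the set of
minterms `M` (a monotone DNF formula); `idr e = none` means `e` has no IDR and
never fails unless initially failed.  `cascade idr K t` is the set of failed
entities at time step `t`, starting from the initially failed set `K`. -/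
noncomputable def cascade {E : Type} [Fintype E]
    (idr : E → Option (Finset (Finset E))) (K : Finset E) : ℕ → Finset E
  | 0 => K
  | t + 1 =>
      cascade idr K t ∪
        Finset.univ.filter fun e =>
          ∃ M, idr e = some M ∧ ∀ m ∈ M, (m ∩ cascade idr K t).Nonempty


/-- Adding a new minterm (as a disjunction) to the IDR of one entity `d` can
only shrink the failure sets: the cascade `F'` of the modified network is
contained in the cascade `F` of the original network at every time step. -/
theorem cascade_subset_of_add_minterm {E : Type} [Fintype E]
    (idr idr' : E → Option (Finset (Finset E))) (K : Finset E)
    (d : E) (M : Finset (Finset E)) (m₀ : Finset E)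
    (hd : idr d = some M) (hd' : idr' d = some (insert m₀ M))
    (hoth : ∀ e, e ≠ d → idr' e = idr e) :
    ∀ t, cascade idr' K t ⊆ cascade idr K t := by
  intro t
  induction t with
  | zero => exact fun x hx => hx
  | succ t ih =>
    intro x hx
    simp only [cascade, Finset.mem_union, Finset.mem_filter, Finset.mem_univ, true_and] at hx ⊢
    rcases hx with hx | ⟨M', hM', hall⟩
    · exact Or.inl (ih hx)
    · right
      have key : ∀ m : Finset E, (m ∩ cascade idr' K t).Nonempty →
          (m ∩ cascade idr K t).Nonempty := by
        intro m ⟨y, hy⟩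
        rw [Finset.mem_inter] at hy
        exact ⟨y, Finset.mem_inter.mpr ⟨hy.1, ih hy.2⟩⟩
      by_cases hxd : x = d
      · subst hxd
        rw [hd'] at hM'
        obtain rfl : insert m₀ M = M' := Option.some.inj hM'
        exact ⟨M, hd, fun m hm => key m (hall m (Finset.mem_insert_of_mem hm))⟩
      · exact ⟨M', (hoth x hxd ▸ hM'), fun m hm => key m (hall m hm)⟩
end

section
/- If an auxiliary entity x never fails during the cascade in the original network, then adding the singleton minterm {x} as a disjunction to the IDR of an entity d guarantees d never fails in the modified cascade (provided d is not in the initial failure set). -/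
open scoped Classical

/-- If an auxiliary entity `x` never fails in the original cascade, then adding
the singleton minterm `{x}` as a disjunction to the IDR of an entity `d` not in
the initial failure set guarantees that `d` never fails in the modified
cascade. -/
theorem auxiliary_disjunct_protects {E : Type} [Fintype E]
    (idr idr' : E → Option (Finset (Finset E))) (K : Finset E)
    (d x : E) (M : Finset (Finset E))
    (hx : ∀ t, x ∉ cascade idr K t) (hdK : d ∉ K)
    (hd : idr d = some M) (hd' : idr' d = some (insert {x} M))
    (hoth : ∀ e, e ≠ d → idr' e = idr e) :
    ∀ t, d ∉ cascade idr' K t := by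
  have hsub : ∀ t, cascade idr' K t ⊆ cascade idr K t := by
    intro t
    induction t with
    | zero => exact Finset.Subset.refl _
    | succ t ih =>
      intro e he
      simp only [cascade, Finset.mem_union, Finset.mem_filter, Finset.mem_univ,
        true_and] at he ⊢
      rcases he with he | ⟨N, hN, hall⟩
      · exact Or.inl (ih he)
      · by_cases hed : e = d
        · subst hed
          rw [hd'] at hN
          obtain ⟨y, hy⟩ := hall {x} (by { cases hN; exact Finset.mem_insert_self _ _ })
          simp only [Finset.mem_inter, Finset.mem_singleton] at hy
          exact absurd (ih hy.2) (hy.1 ▸ hx t)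
        · refine Or.inr ⟨N, (hoth e hed) ▸ hN, fun m hm => ?_⟩
          obtain ⟨y, hy⟩ := hall m hm
          simp only [Finset.mem_inter] at hy
          exact ⟨y, Finset.mem_inter.mpr ⟨hy.1, ih hy.2⟩⟩
  intro t
  induction t with
  | zero => exact hdK
  | succ t ih =>
    intro hmem
    simp only [cascade, Finset.mem_union, Finset.mem_filter, Finset.mem_univ,
      true_and] at hmem
    rcases hmem with h | ⟨N, hN, hall⟩
    · exact ih h
    · rw [hd'] at hN
      obtain ⟨y, hy⟩ := hall {x} (by { cases hN; exact Finset.mem_insert_self _ _ })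
      simp only [Finset.mem_inter, Finset.mem_singleton] at hy
      exact absurd (hsub t hy.2) (hy.1 ▸ hx t)
end

section
/- The decision version of the Auxiliary Entity Allocation Problem (AEAP) is NP-hard, via a polynomial reduction from Set Cover: given a Set Cover instance (U, S, X), there exist ≤ X subsets covering U if and only if in the constructed interdependent network one can modify X IDRs (each by adding one auxiliary entity as a new disjunct) so that at least X + |U| entities are protected from induced failure when the K most vulnerable entities fail initially. -/
open scoped Classical

/-- Entities of the Set Cover reduction network:
`A₁ = Fin n` (one per universe element), `B = Fin m` (one per subset),
`A₂ = Fin m`, and `A₃ = Fin X` (entities with no IDRs). -/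
abbrev Ent (n m X : ℕ) : Type := (Fin n ⊕ Fin m) ⊕ (Fin m ⊕ Fin X)

/-- `a_i ∈ A₁` -/
abbrev entA1 {n m X : ℕ} (i : Fin n) : Ent n m X := Sum.inl (Sum.inl i)
/-- `b_j ∈ B` -/
abbrev entB {n m X : ℕ} (j : Fin m) : Ent n m X := Sum.inl (Sum.inr j)
/-- `a_{2j} ∈ A₂` -/
abbrev entA2 {n m X : ℕ} (j : Fin m) : Ent n m X := Sum.inr (Sum.inl j)
/-- entity of `A₃` -/
abbrev entA3 {n m X : ℕ} (x : Fin X) : Ent n m X := Sum.inr (Sum.inr x)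

/-- IDRs of the Set Cover reduction network: `a_i ← b_{j₁} + ⋯ + b_{j_k}`
(over the subsets `S j` containing element `i`), `b_j ← a_{2j}`, and entities
of `A₂` and `A₃` have no IDRs. -/
noncomputable def scIdr (n m X : ℕ) (S : Fin m → Finset (Fin n)) :
    Ent n m X → Option (Finset (Finset (Ent n m X)))
  | Sum.inl (Sum.inl i) =>
      some ((Finset.univ.filter fun j => i ∈ S j).image
        fun j => ({entB j} : Finset (Ent n m X)))
  | Sum.inl (Sum.inr j) => some {({entA2 j} : Finset (Ent n m X))}
  | Sum.inr _ => none

/-- The initial failure set `K = A₂` (the `|A₂|` most vulnerable entities). -/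
noncomputable def scK (n m X : ℕ) : Finset (Ent n m X) :=
  Finset.univ.image fun j : Fin m => (entA2 j : Ent n m X)

/-- The final failure set of a cascade (the cascade stabilizes after at most
`|E| - 1` steps, so we evaluate it at step `|E|`). -/
noncomputable def finalFail {E : Type} [Fintype E]
    (idr : E → Option (Finset (Finset E))) (K : Finset E) : Finset E :=
  cascade idr K (Fintype.card E)

namespace AEAPaux

lemma sing_inter_nonempty {E : Type} [DecidableEq E] (a : E) (s : Finset E) :
    (({a} : Finset E) ∩ s).Nonempty ↔ a ∈ s := by
  constructor
  · rintro ⟨x, hx⟩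
    rw [Finset.mem_inter, Finset.mem_singleton] at hx
    exact hx.1 ▸ hx.2
  · intro h; exact ⟨a, Finset.mem_inter.2 ⟨Finset.mem_singleton_self a, h⟩⟩

variable {E : Type} [Fintype E]

lemma cascade_succ (idr : E → Option (Finset (Finset E))) (K : Finset E) (t : ℕ) :
    cascade idr K (t+1) = cascade idr K t ∪
        (Finset.univ.filter fun e =>
          ∃ M, idr e = some M ∧ ∀ m ∈ M, (m ∩ cascade idr K t).Nonempty) := by
  rw [cascade]

lemma cascade_mono (idr : E → Option (Finset (Finset E))) (K : Finset E) :
    Monotone (cascade idr K) := by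
  apply monotone_nat_of_le_succ
  intro t
  rw [cascade_succ]
  exact Finset.subset_union_left

lemma cascade_fixed (idr : E → Option (Finset (Finset E))) (K : Finset E) (t : ℕ)
    (h : cascade idr K (t+1) = cascade idr K t) :
    ∀ s, cascade idr K (t+s) = cascade idr K t := by
  intro s
  induction s with
  | zero => rfl
  | succ s ih =>
      have e1 : t + (s+1) = (t+s) + 1 := rfl
      rw [e1, cascade_succ, ih, ← cascade_succ, h]

lemma finalFail_eq (idr : E → Option (Finset (Finset E))) (K : Finset E) (t : ℕ)
    (ht : t ≤ Fintype.card E) (h : cascade idr K (t+1) = cascade idr K t) :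
    finalFail idr K = cascade idr K t := by
  obtain ⟨s, hs⟩ := Nat.exists_eq_add_of_le ht
  rw [finalFail, hs, cascade_fixed idr K t h s]

lemma mem_cascade_succ {idr : E → Option (Finset (Finset E))} {K : Finset E} {t : ℕ}
    {e : E} :
    e ∈ cascade idr K (t+1) ↔ e ∈ cascade idr K t ∨
      ∃ M, idr e = some M ∧ ∀ mm ∈ M, (mm ∩ cascade idr K t).Nonempty := by
  rw [cascade_succ]; simp

lemma cascade_subset_of_refines (idr idr' : E → Option (Finset (Finset E))) (K : Finset E)
    (h : ∀ e M', idr' e = some M' → ∃ M, idr e = some M ∧ M ⊆ M') :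
    ∀ t, cascade idr' K t ⊆ cascade idr K t := by
  intro t
  induction t with
  | zero => exact Finset.Subset.refl _
  | succ t ih =>
      rw [cascade_succ, cascade_succ]
      apply Finset.union_subset
      · exact ih.trans Finset.subset_union_left
      · intro e he
        rw [Finset.mem_filter] at he
        obtain ⟨-, M', hM', hall⟩ := he
        obtain ⟨M, hM, hsub⟩ := h e M' hM'
        apply Finset.mem_union_right
        rw [Finset.mem_filter]
        refine ⟨Finset.mem_univ e, M, hM, fun mm hmm => ?_⟩
        obtain ⟨x, hx⟩ := hall mm (hsub hmm)
        rw [Finset.mem_inter] at hx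
        exact ⟨x, Finset.mem_inter.2 ⟨hx.1, ih hx.2⟩⟩

variable (n m X : ℕ) (S : Fin m → Finset (Fin n))

/-- everything except `A₃`. -/
noncomputable def F0 : Finset (Ent n m X) :=
  Finset.univ.filter fun e => ∀ y : Fin X, e ≠ entA3 y

lemma card_Ent : Fintype.card (Ent n m X) = n + m + (m + X) := by simp

lemma scK_subset_F0 : scK n m X ⊆ F0 n m X := by
  intro e he
  simp only [scK, Finset.mem_image] at he
  obtain ⟨j, -, rfl⟩ := he
  simp [F0]

lemma cascade_subset_F0 (idr : Ent n m X → Option (Finset (Finset (Ent n m X))))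
    (hidr : ∀ y : Fin X, idr (entA3 y) = none) (t : ℕ) :
    cascade idr (scK n m X) t ⊆ F0 n m X := by
  induction t with
  | zero => exact scK_subset_F0 n m X
  | succ t ih =>
      intro e he
      rw [mem_cascade_succ] at he
      rcases he with he | ⟨M, hM, -⟩
      · exact ih he
      rcases e with (e | (j | y))
      · simp [F0]
      · simp [F0]
      · rw [hidr y] at hM; cases hM

lemma casc1 (hcov : ∀ i : Fin n, ∃ j, i ∈ S j) :
    cascade (scIdr n m X S) (scK n m X) 1
      = scK n m X ∪ Finset.univ.image (entB (n := n) (m := m) (X := X)) := by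
  ext e
  rw [Finset.mem_union, mem_cascade_succ]
  have h0 : cascade (scIdr n m X S) (scK n m X) 0 = scK n m X := rfl
  rw [h0]
  rcases e with ((i | j) | (j | y))
  · obtain ⟨j, hj⟩ := hcov i
    constructor
    · rintro (h | ⟨M, hM, hall⟩)
      · exact Or.inl h
      exfalso
      simp only [scIdr, Option.some.injEq] at hM
      subst hM
      have := hall {entB j} (Finset.mem_image.2 ⟨j, by simp [hj], rfl⟩)
      simp only [sing_inter_nonempty] at this
      simp [scK] at this
    · rintro (h | h)
      · exact Or.inl h
      · exfalso; simp at h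
  · constructor
    · rintro -
      exact Or.inr (Finset.mem_image.2 ⟨j, Finset.mem_univ j, rfl⟩)
    · rintro -
      refine Or.inr ⟨_, rfl, ?_⟩
      intro mm hmm
      rw [Finset.mem_singleton] at hmm
      subst hmm
      simp only [sing_inter_nonempty]
      simp [scK]
  · simp [scIdr, scK]
  · simp [scIdr, scK]

lemma casc2 (hcov : ∀ i : Fin n, ∃ j, i ∈ S j) :
    cascade (scIdr n m X S) (scK n m X) 2 = F0 n m X := by
  ext e
  rw [mem_cascade_succ, casc1 n m X S hcov]
  rcases e with ((i | j) | (j | y))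
  · refine iff_of_true ?_ (by simp [F0])
    refine Or.inr ⟨_, rfl, ?_⟩
    intro mm hmm
    rw [Finset.mem_image] at hmm
    obtain ⟨j, -, rfl⟩ := hmm
    simp only [sing_inter_nonempty]
    exact Finset.mem_union_right _ (Finset.mem_image.2 ⟨j, Finset.mem_univ j, rfl⟩)
  · refine iff_of_true ?_ (by simp [F0])
    exact Or.inl (Finset.mem_union_right _ (Finset.mem_image.2 ⟨j, Finset.mem_univ j, rfl⟩))
  · refine iff_of_true ?_ (by simp [F0])
    exact Or.inl (Finset.mem_union_left _ (by simp [scK]))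
  · refine iff_of_false ?_ (by simp [F0])
    rintro (h | ⟨M, hM, -⟩)
    · simp [scK] at h
    · simp [scIdr] at hM

lemma casc3 (hcov : ∀ i : Fin n, ∃ j, i ∈ S j) :
    cascade (scIdr n m X S) (scK n m X) (2+1) = cascade (scIdr n m X S) (scK n m X) 2 := by
  rw [casc2 n m X S hcov]
  ext e
  rw [mem_cascade_succ, casc2 n m X S hcov]
  constructor
  · rintro (h | ⟨M, hM, -⟩)
    · exact h
    · rcases e with ((i | j) | (j | y))
      · simp [F0]
      · simp [F0]
      · simp [F0]
      · simp [scIdr] at hM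
  · exact Or.inl

lemma finalFail_orig (hcov : ∀ i : Fin n, ∃ j, i ∈ S j) (hm : 1 ≤ m) :
    finalFail (scIdr n m X S) (scK n m X) = F0 n m X := by
  rw [finalFail_eq _ _ 2 (by rw [card_Ent]; omega) (casc3 n m X S hcov),
    casc2 n m X S hcov]

/-- the modified IDRs in the forward direction -/
noncomputable def fIdr (C'' : Finset (Fin m)) (x₀ : Fin X) :
    Ent n m X → Option (Finset (Finset (Ent n m X))) :=
  fun e => if e ∈ C''.image (entB (n := n) (m := m) (X := X)) then
      some (insert ({entA3 x₀} : Finset (Ent n m X)) ((scIdr n m X S e).getD ∅))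
    else scIdr n m X S e

variable (C'' : Finset (Fin m)) (x₀ : Fin X)

lemma fIdr_A1 (i : Fin n) : fIdr n m X S C'' x₀ (entA1 i) = scIdr n m X S (entA1 i) := by
  rw [fIdr, if_neg]
  simp

lemma fIdr_A2 (j : Fin m) : fIdr n m X S C'' x₀ (entA2 j) = scIdr n m X S (entA2 j) := by
  rw [fIdr, if_neg]
  simp

lemma fIdr_A3 (y : Fin X) : fIdr n m X S C'' x₀ (entA3 y) = scIdr n m X S (entA3 y) := by
  rw [fIdr, if_neg]
  simp

lemma fIdr_B_mem (j : Fin m) (hj : j ∈ C'') :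
    fIdr n m X S C'' x₀ (entB j) =
      some (insert ({entA3 x₀} : Finset (Ent n m X)) {({entA2 j} : Finset (Ent n m X))}) := by
  rw [fIdr, if_pos (by simp [hj])]
  rfl

lemma fIdr_B_not (j : Fin m) (hj : j ∉ C'') :
    fIdr n m X S C'' x₀ (entB j) = scIdr n m X S (entB j) := by
  rw [fIdr, if_neg (by simp [hj])]

/-- final failure set of the modified network -/
noncomputable def G : Finset (Ent n m X) :=
  scK n m X ∪ (Finset.univ.filter fun j => j ∉ C'').image (entB (n := n) (m := m) (X := X))

lemma fcasc1 (hcov : ∀ i : Fin n, ∃ j, i ∈ S j) :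
    cascade (fIdr n m X S C'' x₀) (scK n m X) 1 = G n m X C'' := by
  ext e
  rw [mem_cascade_succ]
  have h0 : cascade (fIdr n m X S C'' x₀) (scK n m X) 0 = scK n m X := rfl
  rw [h0, G]
  rcases e with ((i | j) | (j | y))
  · refine iff_of_false ?_ (by simp [scK])
    rintro (h | ⟨M, hM, hall⟩)
    · simp [scK] at h
    · rw [fIdr_A1] at hM
      simp only [scIdr, Option.some.injEq] at hM
      subst hM
      obtain ⟨j, hj⟩ := hcov i
      have := hall {entB j} (Finset.mem_image.2 ⟨j, by simp [hj], rfl⟩)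
      simp only [sing_inter_nonempty] at this
      simp [scK] at this
  · by_cases hj : j ∈ C''
    · refine iff_of_false ?_ (by simp [scK, hj])
      rintro (h | ⟨M, hM, hall⟩)
      · simp [scK] at h
      · rw [fIdr_B_mem n m X S C'' x₀ j hj] at hM
        obtain rfl : _ = M := Option.some.inj hM
        have := hall {entA3 x₀} (Finset.mem_insert_self _ _)
        simp only [sing_inter_nonempty] at this
        simp [scK] at this
    · refine iff_of_true ?_ (by simp [scK, hj])
      refine Or.inr ⟨_, (fIdr_B_not n m X S C'' x₀ j hj).trans rfl, ?_⟩
      intro mm hmm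
      simp only [scIdr, Finset.mem_singleton] at hmm
      subst hmm
      simp only [sing_inter_nonempty]
      simp [scK]
  · refine iff_of_true (Or.inl (by simp [scK])) (by simp [scK])
  · refine iff_of_false ?_ (by simp [scK])
    rintro (h | ⟨M, hM, -⟩)
    · simp [scK] at h
    · rw [fIdr_A3] at hM
      simp [scIdr] at hM

lemma fcasc2 (hcov : ∀ i : Fin n, ∃ j ∈ C'', i ∈ S j) :
    cascade (fIdr n m X S C'' x₀) (scK n m X) (1+1) =
      cascade (fIdr n m X S C'' x₀) (scK n m X) 1 := by
  have hcov' : ∀ i : Fin n, ∃ j, i ∈ S j := fun i => (hcov i).imp fun j h => h.2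
  rw [fcasc1 n m X S C'' x₀ hcov']
  ext e
  rw [mem_cascade_succ, fcasc1 n m X S C'' x₀ hcov']
  constructor
  · rintro (h | ⟨M, hM, hall⟩)
    · exact h
    · rcases e with ((i | j) | (j | y))
      · exfalso
        rw [fIdr_A1] at hM
        simp only [scIdr, Option.some.injEq] at hM
        subst hM
        obtain ⟨j, hj, hij⟩ := hcov i
        have := hall {entB j} (Finset.mem_image.2 ⟨j, by simp [hij], rfl⟩)
        simp only [sing_inter_nonempty] at this
        simp [G, scK, hj] at this
      · by_cases hj : j ∈ C''
        · exfalso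
          rw [fIdr_B_mem n m X S C'' x₀ j hj] at hM
          obtain rfl : _ = M := Option.some.inj hM
          have := hall {entA3 x₀} (Finset.mem_insert_self _ _)
          simp only [sing_inter_nonempty] at this
          simp [G, scK] at this
        · exact Finset.mem_union_right _ (Finset.mem_image.2 ⟨j, by simp [hj], rfl⟩)
      · exact Finset.mem_union_left _ (by simp [scK])
      · exfalso
        rw [fIdr_A3] at hM
        simp [scIdr] at hM
  · exact Or.inl

lemma entA1_inj : Function.Injective (entA1 (n := n) (m := m) (X := X)) := by
  intro a b h
  simpa using h

lemma entB_inj : Function.Injective (entB (n := n) (m := m) (X := X)) := by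
  intro a b h
  simpa using h

lemma finalFail_fwd (hm : 1 ≤ m) (hcov : ∀ i : Fin n, ∃ j ∈ C'', i ∈ S j) :
    finalFail (fIdr n m X S C'' x₀) (scK n m X) = G n m X C'' := by
  have hcov' : ∀ i : Fin n, ∃ j, i ∈ S j := fun i => (hcov i).imp fun j h => h.2
  rw [finalFail_eq _ _ 1 (by rw [card_Ent]; omega) (fcasc2 n m X S C'' x₀ hcov),
    fcasc1 n m X S C'' x₀ hcov']

lemma diff_eq :
    F0 n m X \ G n m X C'' =
      Finset.univ.image (entA1 (n := n) (m := m) (X := X)) ∪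
        C''.image (entB (n := n) (m := m) (X := X)) := by
  ext e
  rw [Finset.mem_sdiff, Finset.mem_union]
  rcases e with ((i | j) | (j | y))
  · refine iff_of_true ⟨by simp [F0], ?_⟩ (Or.inl (by simp))
    simp [G, scK]
  · constructor
    · rintro ⟨-, hG⟩
      refine Or.inr (Finset.mem_image.2 ⟨j, ?_, rfl⟩)
      by_contra hj
      exact hG (Finset.mem_union_right _ (Finset.mem_image.2 ⟨j, by simp [hj], rfl⟩))
    · rintro (h | h)
      · exfalso; simp at h
      · refine ⟨by simp [F0], ?_⟩
        rw [Finset.mem_image] at h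
        obtain ⟨j', hj', hj'e⟩ := h
        obtain rfl : j' = j := by simpa using hj'e
        intro hG
        rw [G, Finset.mem_union] at hG
        rcases hG with hG | hG
        · simp [scK] at hG
        · rw [Finset.mem_image] at hG
          obtain ⟨j'', hj'', hj''e⟩ := hG
          obtain rfl : j'' = j' := by simpa using hj''e
          simp [hj'] at hj''
  · refine iff_of_false ?_ (by simp)
    rintro ⟨-, hG⟩
    exact hG (Finset.mem_union_left _ (by simp [scK]))
  · refine iff_of_false ?_ (by simp)
    rintro ⟨hF, -⟩
    simp [F0] at hF

lemma diff_card : (F0 n m X \ G n m X C'').card = n + C''.card := by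
  rw [diff_eq, Finset.card_union_of_disjoint, Finset.card_image_of_injective _ (entA1_inj n m X),
    Finset.card_image_of_injective _ (entB_inj n m X), Finset.card_univ, Fintype.card_fin]
  rw [Finset.disjoint_left]
  rintro e he he'
  rw [Finset.mem_image] at he he'
  obtain ⟨i, -, rfl⟩ := he
  obtain ⟨j, -, hj⟩ := he'
  simp at hj


section reverse

variable (C : Finset (Ent n m X)) (idr' : Ent n m X → Option (Finset (Finset (Ent n m X))))

lemma r_refines
    (hmod : ∀ d ∈ C, ∃ (M : Finset (Finset (Ent n m X))) (x : Ent n m X),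
      scIdr n m X S d = some M ∧ idr' d = some (insert ({x} : Finset (Ent n m X)) M))
    (hunmod : ∀ e ∉ C, idr' e = scIdr n m X S e) :
    ∀ e M', idr' e = some M' → ∃ M, scIdr n m X S e = some M ∧ M ⊆ M' := by
  intro e M' h
  by_cases he : e ∈ C
  · obtain ⟨M, x, h1, h2⟩ := hmod e he
    rw [h] at h2
    obtain rfl := Option.some.inj h2
    exact ⟨M, h1, Finset.subset_insert _ _⟩
  · rw [hunmod e he] at h
    exact ⟨M', h, Finset.Subset.refl _⟩

lemma r_B_fail (hunmod : ∀ e ∉ C, idr' e = scIdr n m X S e)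
    (j : Fin m) (hj : entB j ∉ C) :
    (entB j : Ent n m X) ∈ cascade idr' (scK n m X) 1 := by
  rw [mem_cascade_succ]
  refine Or.inr ⟨_, (hunmod _ hj).trans rfl, ?_⟩
  intro mm hmm
  rw [Finset.mem_singleton] at hmm
  subst hmm
  simp only [sing_inter_nonempty]
  show (entA2 j : Ent n m X) ∈ scK n m X
  simp [scK]

lemma r_A1_fail (hunmod : ∀ e ∉ C, idr' e = scIdr n m X S e)
    (i : Fin n) (hi : entA1 i ∉ C) (hall : ∀ j, i ∈ S j → entB j ∉ C) :
    (entA1 i : Ent n m X) ∈ cascade idr' (scK n m X) 2 := by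
  rw [mem_cascade_succ]
  refine Or.inr ⟨(Finset.univ.filter fun j => i ∈ S j).image
      (fun j => ({entB j} : Finset (Ent n m X))), (hunmod _ hi).trans rfl, ?_⟩
  intro mm hmm
  rw [Finset.mem_image] at hmm
  obtain ⟨j, hj, rfl⟩ := hmm
  rw [Finset.mem_filter] at hj
  simp only [sing_inter_nonempty]
  exact r_B_fail n m X S C idr' hunmod j (hall j hj.2)

end reverse

end AEAPaux


/-- NP-hardness reduction from Set Cover to AEAP: the Set Cover instance
`(U = Fin n, S, X)` has a cover with at most `X` subsets iff in the reduction
network one can modify exactly `X` IDRs — each by adding one auxiliary entity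
(one that does not fail in the original cascade) as a new singleton disjunct —
so that at least `X + |U|` entities are protected from induced failure when the
most vulnerable entities `K = A₂` fail initially. -/
theorem setCover_iff_AEAP (n m X : ℕ) (S : Fin m → Finset (Fin n))
    (hcov : ∀ i : Fin n, ∃ j, i ∈ S j) (hX : X ≤ m) :
    (∃ C : Finset (Fin m), C.card ≤ X ∧ ∀ i : Fin n, ∃ j ∈ C, i ∈ S j) ↔
    (∃ (C : Finset (Ent n m X))
        (idr' : Ent n m X → Option (Finset (Finset (Ent n m X)))),
      C.card = X ∧
      (∀ d ∈ C, ∃ (M : Finset (Finset (Ent n m X))) (x : Ent n m X),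
        scIdr n m X S d = some M ∧
        idr' d = some (insert ({x} : Finset (Ent n m X)) M) ∧
        x ∉ finalFail (scIdr n m X S) (scK n m X)) ∧
      (∀ e ∉ C, idr' e = scIdr n m X S e) ∧
      X + n ≤
        (finalFail (scIdr n m X S) (scK n m X) \
          finalFail idr' (scK n m X)).card) := by
  classical
  rcases Nat.eq_zero_or_pos m with hm | hm
  · have hn : n = 0 := by
      by_contra h
      obtain ⟨j, -⟩ := hcov ⟨0, Nat.pos_of_ne_zero h⟩
      exact absurd j.2 (by omega)
    have hX0 : X = 0 := by omega
    constructor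
    · intro _
      refine ⟨∅, scIdr n m X S, by simp [hX0], by simp, fun e _ => rfl, ?_⟩
      simp [hn, hX0]
    · intro _
      exact ⟨∅, by simp, fun i => absurd i.2 (by omega)⟩
  · constructor
    · rintro ⟨C', hC'card, hC'cov⟩
      rcases Nat.eq_zero_or_pos X with hX0 | hXpos
      · have hC'empty : C' = ∅ := Finset.card_eq_zero.1 (by omega)
        have hn : n = 0 := by
          by_contra h
          obtain ⟨j, hj, -⟩ := hC'cov ⟨0, Nat.pos_of_ne_zero h⟩
          rw [hC'empty] at hj
          simp at hj
        refine ⟨∅, scIdr n m X S, by simp [hX0], by simp, fun e _ => rfl, ?_⟩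
        simp [hn, hX0]
      · set x₀ : Fin X := ⟨0, hXpos⟩ with hx₀
        obtain ⟨C'', hsub, -, hCcard⟩ :=
          Finset.exists_subsuperset_card_eq (Finset.subset_univ C') hC'card
            (by simpa using hX)
        have hcov'' : ∀ i : Fin n, ∃ j ∈ C'', i ∈ S j := by
          intro i
          obtain ⟨j, hj, hij⟩ := hC'cov i
          exact ⟨j, hsub hj, hij⟩
        refine ⟨C''.image entB, AEAPaux.fIdr n m X S C'' x₀, ?_, ?_, ?_, ?_⟩
        · rw [Finset.card_image_of_injective _ (AEAPaux.entB_inj n m X), hCcard]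
        · intro d hd
          rw [Finset.mem_image] at hd
          obtain ⟨j, hj, rfl⟩ := hd
          refine ⟨{({entA2 j} : Finset (Ent n m X))}, entA3 x₀, rfl,
            AEAPaux.fIdr_B_mem n m X S C'' x₀ j hj, ?_⟩
          rw [AEAPaux.finalFail_orig n m X S hcov hm]
          simp [AEAPaux.F0]
        · intro e he
          rw [AEAPaux.fIdr, if_neg he]
        · rw [AEAPaux.finalFail_orig n m X S hcov hm,
            AEAPaux.finalFail_fwd n m X S C'' x₀ hm hcov'',
            AEAPaux.diff_card, hCcard]
          omega
    · rintro ⟨C, idr', hC, hmod, hunmod, hcard⟩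
      have hFF := AEAPaux.finalFail_orig n m X S hcov hm
      have hcardE : 2 ≤ Fintype.card (Ent n m X) := by
        rw [AEAPaux.card_Ent]; omega
      have hBfail : ∀ j : Fin m, entB j ∉ C →
          (entB j : Ent n m X) ∈ finalFail idr' (scK n m X) := by
        intro j hj
        exact AEAPaux.cascade_mono idr' (scK n m X) (by omega : 1 ≤ Fintype.card (Ent n m X))
          (AEAPaux.r_B_fail n m X S C idr' hunmod j hj)
      have hKfail : ∀ e ∈ scK n m X, e ∈ finalFail idr' (scK n m X) := by
        intro e he
        exact AEAPaux.cascade_mono idr' (scK n m X) (Nat.zero_le _) he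
      set CB := C.filter (fun e => ∃ j : Fin m, e = entB j) with hCBdef
      set D := finalFail (scIdr n m X S) (scK n m X) \ finalFail idr' (scK n m X) with hDdef
      have hDsub : D ⊆ Finset.univ.image entA1 ∪ CB := by
        intro e he
        rw [hDdef, Finset.mem_sdiff, hFF] at he
        obtain ⟨heF, heN⟩ := he
        rcases e with ((i | j) | (j | y))
        · exact Finset.mem_union_left _ (by simp)
        · refine Finset.mem_union_right _ ?_
          rw [hCBdef, Finset.mem_filter]
          refine ⟨?_, j, rfl⟩
          by_contra h
          exact heN (hBfail j h)
        · exact absurd (hKfail _ (by simp [scK])) heN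
        · exact absurd heF (by simp [AEAPaux.F0])
      have hCBcard : CB.card ≤ X :=
        le_of_le_of_eq (Finset.card_filter_le _ _) hC
      have hUcard : (Finset.univ.image (entA1 (n := n) (m := m) (X := X)) ∪ CB).card ≤
          n + CB.card := by
        refine (Finset.card_union_le _ _).trans ?_
        have h1 : (Finset.univ.image (entA1 (n := n) (m := m) (X := X))).card = n := by
          rw [Finset.card_image_of_injective _ (AEAPaux.entA1_inj n m X), Finset.card_univ,
            Fintype.card_fin]
        omega
      have hDcard := Finset.card_le_card hDsub
      have hXle : X ≤ CB.card := by omega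
      have hCCB : C.card ≤ CB.card := by omega
      have hCBeq : CB = C := Finset.eq_of_subset_of_card_le (Finset.filter_subset _ _) hCCB
      have hDeq : D = Finset.univ.image entA1 ∪ CB :=
        Finset.eq_of_subset_of_card_le hDsub (by omega)
      have hA1D : ∀ i : Fin n, (entA1 i : Ent n m X) ∈ D := by
        intro i
        rw [hDeq]
        exact Finset.mem_union_left _ (by simp)
      have hConlyB : ∀ e ∈ C, ∃ j : Fin m, e = entB j := by
        intro e he
        have hcb : e ∈ CB := by rw [hCBeq]; exact he
        exact (Finset.mem_filter.1 hcb).2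
      refine ⟨Finset.univ.filter (fun j => entB j ∈ C), ?_, ?_⟩
      · have himg : (Finset.univ.filter (fun j : Fin m => entB j ∈ C)).image
            (entB (n := n) (m := m) (X := X)) = C := by
          ext e
          rw [Finset.mem_image]
          constructor
          · rintro ⟨j, hj, rfl⟩
            exact (Finset.mem_filter.1 hj).2
          · intro he
            obtain ⟨j, rfl⟩ := hConlyB e he
            exact ⟨j, Finset.mem_filter.2 ⟨Finset.mem_univ _, he⟩, rfl⟩
        have := Finset.card_image_of_injective
          (Finset.univ.filter (fun j : Fin m => entB j ∈ C)) (AEAPaux.entB_inj n m X)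
        rw [himg] at this
        omega
      · intro i
        by_contra hno
        push_neg at hno
        have hiC : entA1 i ∉ C := by
          intro h
          obtain ⟨j, hj⟩ := hConlyB _ h
          simp at hj
        have hBnotC : ∀ j, i ∈ S j → entB j ∉ C := by
          intro j hij hjC
          exact hno j (Finset.mem_filter.2 ⟨Finset.mem_univ _, hjC⟩) hij
        have h2 : (entA1 i : Ent n m X) ∈ finalFail idr' (scK n m X) :=
          AEAPaux.cascade_mono idr' (scK n m X) hcardE
            (AEAPaux.r_A1_fail n m X S C idr' hunmod i hiC hBnotC)
        exact (Finset.mem_sdiff.1 (hA1D i)).2 h2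
end

section
/- In the Set Cover reduction network, with initial failure set K = A_2, the cascade without any modification causes all entities in A_2 ∪ B ∪ A_1 to fail, while entities in A_3 never fail. -/
open scoped Classical

/-!
`A₂` fails at time 0, every `b_j` at time 1 through its single minterm `{a_{2j}}`, and every
`a_i` at time 2 since each of its minterms is a singleton `{b_j}`. Entities of `A₃` have no IDR
and are not initially failed, so they never fail. The cascade is monotone and, once two
consecutive steps agree, constant; hence it stabilizes within `|E|` steps and `finalFail`
contains every entity that fails at some time.
-/

section Cascade

variable {E : Type} [Fintype E] (idr : E → Option (Finset (Finset E))) (K : Finset E)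

lemma cascade_subset_succ (t : ℕ) : cascade idr K t ⊆ cascade idr K (t + 1) :=
  Finset.subset_union_left

lemma cascade_mono : Monotone (cascade idr K) :=
  monotone_nat_of_le_succ (cascade_subset_succ idr K)

lemma self_subset_cascade (t : ℕ) : K ⊆ cascade idr K t :=
  cascade_mono idr K (Nat.zero_le t)

variable {idr K}

lemma mem_cascade_succ {e : E} {M : Finset (Finset E)} {t : ℕ} (he : idr e = some M)
    (hM : ∀ m ∈ M, (m ∩ cascade idr K t).Nonempty) : e ∈ cascade idr K (t + 1) :=
  Finset.mem_union_right _ (Finset.mem_filter.mpr ⟨Finset.mem_univ e, M, he, hM⟩)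

lemma notMem_cascade_of_idr_eq_none {e : E} (he : idr e = none) (hK : e ∉ K) (t : ℕ) :
    e ∉ cascade idr K t := by
  induction t with
  | zero => exact hK
  | succ t ih =>
    simp only [cascade, Finset.mem_union, Finset.mem_filter, he, reduceCtorEq, false_and,
      exists_false, and_false, or_false]
    exact ih

lemma cascade_eq_of_succ_eq {s : ℕ} (hs : cascade idr K (s + 1) = cascade idr K s) :
    ∀ t, s ≤ t → cascade idr K t = cascade idr K s := by
  intro t hst
  induction t, hst using Nat.le_induction with
  | base => rfl
  | succ t _ ih => rw [← hs, cascade, ih, cascade]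

lemma le_card_cascade_or_exists_succ_eq (t : ℕ) :
    t ≤ (cascade idr K t).card ∨ ∃ s < t, cascade idr K (s + 1) = cascade idr K s := by
  induction t with
  | zero => exact Or.inl (Nat.zero_le _)
  | succ t ih =>
    rcases ih with ht | ⟨s, hst, hs⟩
    · by_cases hstep : cascade idr K (t + 1) = cascade idr K t
      · exact Or.inr ⟨t, t.lt_succ_self, hstep⟩
      · have hlt := Finset.card_lt_card
          ((cascade_subset_succ idr K t).ssubset_of_ne (Ne.symm hstep))
        exact Or.inl (by omega)
    · exact Or.inr ⟨s, hst.trans t.lt_succ_self, hs⟩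

lemma cascade_subset_finalFail (t : ℕ) : cascade idr K t ⊆ finalFail idr K := by
  rcases le_card_cascade_or_exists_succ_eq (idr := idr) (K := K) (Fintype.card E)
    with hcard | ⟨s, hs, hstable⟩
  · have huniv := Finset.eq_univ_of_card _ (le_antisymm (Finset.card_le_univ _) hcard)
    rw [finalFail, huniv]
    exact Finset.subset_univ _
  · calc cascade idr K t ⊆ cascade idr K (max t s) := cascade_mono idr K (le_max_left t s)
      _ = cascade idr K s := cascade_eq_of_succ_eq hstable _ (le_max_right t s)
      _ = finalFail idr K := (cascade_eq_of_succ_eq hstable _ hs.le).symm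

end Cascade

section SetCover

variable {n m X : ℕ} (S : Fin m → Finset (Fin n))

lemma entA2_mem_cascade (j : Fin m) (t : ℕ) :
    (entA2 j : Ent n m X) ∈ cascade (scIdr n m X S) (scK n m X) t :=
  self_subset_cascade _ _ t (Finset.mem_image_of_mem _ (Finset.mem_univ j))

lemma entB_mem_cascade_one (j : Fin m) :
    (entB j : Ent n m X) ∈ cascade (scIdr n m X S) (scK n m X) 1 :=
  mem_cascade_succ rfl fun _ hm =>
    Finset.mem_singleton.mp hm ▸ ⟨entA2 j, by simpa using entA2_mem_cascade S j 0⟩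

lemma entA1_mem_cascade_two (i : Fin n) :
    (entA1 i : Ent n m X) ∈ cascade (scIdr n m X S) (scK n m X) 2 := by
  refine mem_cascade_succ rfl fun _ hm => ?_
  obtain ⟨j, -, rfl⟩ := Finset.mem_image.mp hm
  exact ⟨entB j, by simpa using entB_mem_cascade_one S j⟩

lemma entA3_notMem_cascade (x : Fin X) (t : ℕ) :
    (entA3 x : Ent n m X) ∉ cascade (scIdr n m X S) (scK n m X) t :=
  notMem_cascade_of_idr_eq_none rfl (by simp [scK]) t

end SetCover

theorem scReduction_cascade_general (n m X : ℕ) (S : Fin m → Finset (Fin n)) :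
    (∀ (t : ℕ) (x : Fin X),
      (entA3 x : Ent n m X) ∉ cascade (scIdr n m X S) (scK n m X) t) ∧
    (∀ e : Ent n m X, e ∈ finalFail (scIdr n m X S) (scK n m X) ↔
      ∀ x : Fin X, e ≠ entA3 x) := by
  refine ⟨fun t x => entA3_notMem_cascade S x t, fun e => ⟨?_, ?_⟩⟩
  · rintro he x rfl
    exact entA3_notMem_cascade S x _ he
  · intro he
    rcases e with (i | j) | (j | x)
    · exact cascade_subset_finalFail 2 (entA1_mem_cascade_two S i)
    · exact cascade_subset_finalFail 1 (entB_mem_cascade_one S j)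
    · exact entA2_mem_cascade S j _
    · exact absurd rfl (he x)

/-- In the Set Cover reduction network with initial failure set `K = A₂`
(assuming every universe element is contained in at least one subset), the
entities of `A₃` never fail at any time step of the cascade, while the final
failure set consists exactly of all entities of `A₂ ∪ B ∪ A₁`. -/
theorem scReduction_cascade (n m X : ℕ) (S : Fin m → Finset (Fin n))
    (hcov : ∀ i : Fin n, ∃ j, i ∈ S j) :
    (∀ (t : ℕ) (x : Fin X),
      (entA3 x : Ent n m X) ∉ cascade (scIdr n m X S) (scK n m X) t) ∧
    (∀ e : Ent n m X, e ∈ finalFail (scIdr n m X S) (scK n m X) ↔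
      ∀ x : Fin X, e ≠ entA3 x) :=
  scReduction_cascade_general n m X S
end
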